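/- Let X_1, X_2, … be i.i.d. real-valued random variables with E|X_1| < ∞. Then, almost surely, the posterior probability p(T_n = 1 | X_1,…,X_n) under the standard normal Dirichlet process mixture with concentration parameter α = 1 does not converge to 1 as n → ∞; indeed, almost surely, limsup_{n→∞} p(T_n = 1 | X_1,…,X_n) ≤ 1 / ( 1 + (1/(2√2)) exp(−μ²/2) ) < 1, where μ = E X_1. -/

import Mathlib

open MeasureTheory Filter Finset

/-- The standard normal density `φ(u) = (2π)^{-1/2} exp(-u²/2)`. -/
noncomputable def stdNormalPDF (u : ℝ) : ℝ :=
  (Real.sqrt (2 * Real.pi))⁻¹ * Real.exp (-u ^ 2 / 2)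

/-- The single-cluster marginal `m(x_S)` of a unit-variance normal component with
standard normal prior on the mean, in closed form. -/
noncomputable def clusterMarginal {n : ℕ} (x : Fin n → ℝ) (S : Finset (Fin n)) : ℝ :=
  (Real.sqrt (S.card + 1))⁻¹ * (∏ j ∈ S, stdNormalPDF (x j)) *
    Real.exp ((∑ j ∈ S, x j) ^ 2 / (2 * (S.card + 1)))

/-- The set `𝒜_t(n)` of ordered partitions `(A_1, …, A_t)` of `{1,…,n}` into `t`
nonempty disjoint sets. -/
def orderedPartitions (n t : ℕ) : Finset (Fin t → Finset (Fin n)) :=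
  Finset.univ.filter fun A =>
    (∀ i, (A i).Nonempty) ∧ (∀ i j, i ≠ j → Disjoint (A i) (A j)) ∧
      Finset.univ.biUnion A = Finset.univ

/-- The CRP (α = 1) weight `p(A) = (1/(n!·t!)) ∏_i (|A_i| - 1)!` of an ordered partition
of `{1,…,n}` into `t` parts. -/
noncomputable def crpWeight {n t : ℕ} (A : Fin t → Finset (Fin n)) : ℝ :=
  (1 / ((n.factorial : ℝ) * (t.factorial : ℝ))) * ∏ i, (((A i).card - 1).factorial : ℝ)

/-- The joint law of the data and the number of clusters under the standard normal DPM
with concentration parameter `α = 1`: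
`p(x, T_n = t) = ∑_{A ∈ 𝒜_t(n)} p(A) ∏_i m(x_{A_i})`. -/
noncomputable def pJoint (n t : ℕ) (x : Fin n → ℝ) : ℝ :=
  ∑ A ∈ orderedPartitions n t, crpWeight A * ∏ i, clusterMarginal x (A i)

/-- The posterior probability of one cluster,
`p(T_n = 1 | x) = p(x, T_n = 1) / ∑_{t=1}^n p(x, T_n = t)`. -/
noncomputable def posteriorOne (n : ℕ) (x : Fin n → ℝ) : ℝ :=
  pJoint n 1 x / ∑ t ∈ Finset.Icc 1 n, pJoint n t x


/-!
Moving one observation `k` into a cluster of its own loses only a factor of order `1/n`: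
comparing CRP weights (`1/(2n(n-1))` against `1/n`) and marginals, where completing the square
bounds the exponent uniformly in `x_k`, the partition `({k}ᶜ, {k})` carries at least `c(x̄)/n`
times the mass of the single cluster, with `c(m) = exp(-m²/2)/(2√2)` and `x̄` the sample mean.
Summing over the `n` choices of `k` gives `p(x, T_n = 2) ≥ c(x̄) p(x, T_n = 1)`, hence
`p(T_n = 1 | x) ≤ 1/(1 + c(x̄))`, and the strong law of large numbers `x̄ → E X₁` concludes.
-/

lemma stdNormalPDF_pos (u : ℝ) : 0 < stdNormalPDF u := by
  unfold stdNormalPDF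
  positivity

lemma clusterMarginal_pos {n : ℕ} (x : Fin n → ℝ) (S : Finset (Fin n)) :
    0 < clusterMarginal x S := by
  have : 0 < ∏ j ∈ S, stdNormalPDF (x j) := prod_pos fun j _ => stdNormalPDF_pos _
  unfold clusterMarginal
  positivity

lemma crpWeight_pos {n t : ℕ} (A : Fin t → Finset (Fin n)) : 0 < crpWeight A := by
  unfold crpWeight
  have : 0 < ∏ i, (((A i).card - 1).factorial : ℝ) := prod_pos fun i _ => by positivity
  positivity

lemma crpWeight_mul_prod_clusterMarginal_pos {n t : ℕ} (x : Fin n → ℝ)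
    (A : Fin t → Finset (Fin n)) : 0 < crpWeight A * ∏ i, clusterMarginal x (A i) :=
  mul_pos (crpWeight_pos A) (prod_pos fun i _ => clusterMarginal_pos x (A i))

lemma pJoint_nonneg (n t : ℕ) (x : Fin n → ℝ) : 0 ≤ pJoint n t x :=
  sum_nonneg fun A _ => (crpWeight_mul_prod_clusterMarginal_pos x A).le

lemma posteriorOne_nonneg (n : ℕ) (x : Fin n → ℝ) : 0 ≤ posteriorOne n x :=
  div_nonneg (pJoint_nonneg n 1 x) (sum_nonneg fun t _ => pJoint_nonneg n t x)

lemma orderedPartitions_one {n : ℕ} (hn : n ≠ 0) :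
    orderedPartitions n 1 = {fun _ => univ} := by
  have : NeZero n := ⟨hn⟩
  ext A
  simp only [orderedPartitions, mem_filter, mem_univ, true_and, mem_singleton]
  constructor
  · rintro ⟨-, -, hcover⟩
    funext i
    rw [Subsingleton.elim i 0, ← hcover]
    simp
  · rintro rfl
    exact ⟨fun _ => univ_nonempty, fun i j hij => absurd (Subsingleton.elim i j) hij, by simp⟩

lemma pJoint_one {n : ℕ} (hn : n ≠ 0) (x : Fin n → ℝ) :
    pJoint n 1 x = clusterMarginal x univ / n := by
  obtain ⟨m, rfl⟩ := Nat.exists_eq_succ_of_ne_zero hn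
  rw [pJoint, orderedPartitions_one hn, sum_singleton, Fin.prod_univ_one, crpWeight,
    Fin.prod_univ_one, card_univ, Fintype.card_fin, Nat.factorial_succ]
  simp only [Nat.factorial_one]
  have : (m.factorial : ℝ) ≠ 0 := by positivity
  push_cast
  field_simp

lemma clusterMarginal_univ {n : ℕ} (x : Fin n → ℝ) :
    clusterMarginal x univ =
      (Real.sqrt (n + 1))⁻¹ * (∏ j, stdNormalPDF (x j)) *
        Real.exp ((∑ j, x j) ^ 2 / (2 * (n + 1))) := by
  simp [clusterMarginal]

def singletonSplit {n : ℕ} (k : Fin n) : Fin 2 → Finset (Fin n) := ![{k}ᶜ, {k}]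

lemma singletonSplit_injective {n : ℕ} : Function.Injective (singletonSplit (n := n)) := by
  intro k k' h
  simpa [singletonSplit] using congrFun h 1

lemma singletonSplit_mem_orderedPartitions {n : ℕ} (hn : 2 ≤ n) (k : Fin n) :
    singletonSplit k ∈ orderedPartitions n 2 := by
  simp only [orderedPartitions, mem_filter, mem_univ, true_and]
  refine ⟨fun i => ?_, fun i j hij => ?_, ?_⟩
  · fin_cases i
    · obtain ⟨j, hj⟩ := Fintype.exists_ne_of_one_lt_card (by simp; omega) k
      exact ⟨j, by simpa [singletonSplit] using hj⟩
    · simp [singletonSplit]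
  · fin_cases i <;> fin_cases j <;> simp_all [singletonSplit]
  · ext a
    by_cases h : a = k <;> simp [singletonSplit, Fin.exists_fin_two, h]

lemma crpWeight_singletonSplit {n : ℕ} (hn : 2 ≤ n) (k : Fin n) :
    crpWeight (singletonSplit k) = 1 / (2 * n * (n - 1)) := by
  obtain ⟨m, rfl⟩ : ∃ m, n = m + 2 := ⟨n - 2, by omega⟩
  simp only [crpWeight, Fin.prod_univ_two, singletonSplit, Matrix.cons_val_zero,
    Matrix.cons_val_one, card_compl, card_singleton, Fintype.card_fin, Nat.factorial_succ]
  simp only [Nat.sub_self, Nat.factorial_zero]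
  have : (m.factorial : ℝ) ≠ 0 := by positivity
  push_cast
  rw [show (m : ℝ) + 2 - 1 = m + 1 by ring]
  field_simp
  ring

lemma clusterMarginal_compl_mul_singleton {n : ℕ} (hn : n ≠ 0) (x : Fin n → ℝ) (k : Fin n) :
    clusterMarginal x {k}ᶜ * clusterMarginal x {k} =
      (Real.sqrt n)⁻¹ * (Real.sqrt 2)⁻¹ * (∏ j, stdNormalPDF (x j)) *
        Real.exp ((∑ j, x j - x k) ^ 2 / (2 * n) + x k ^ 2 / 4) := by
  have hcard : (({k}ᶜ : Finset (Fin n)).card : ℝ) + 1 = n := by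
    rw [card_compl, card_singleton, Fintype.card_fin, Nat.cast_sub (by omega)]
    ring
  have hsum : ∑ j ∈ {k}ᶜ, x j = ∑ j, x j - x k := by
    rw [← sum_compl_add_sum {k} x, sum_singleton, add_sub_cancel_right]
  have hprod :
      ∏ j, stdNormalPDF (x j) = (∏ j ∈ {k}ᶜ, stdNormalPDF (x j)) * stdNormalPDF (x k) := by
    rw [← prod_compl_mul_prod {k}, prod_singleton]
  rw [clusterMarginal, clusterMarginal, hcard, hsum, hprod, Real.exp_add]
  simp only [card_singleton, sum_singleton, prod_singleton]
  norm_num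
  ring

lemma add_sq_div_add_le {a b : ℝ} (ha : 0 < a) (hb : 0 < b) (u v : ℝ) :
    (u + v) ^ 2 / (a + b) ≤ u ^ 2 / a + v ^ 2 / b := by
  simpa [Fin.sum_univ_two] using
    sq_sum_div_le_sum_sq_div univ ![u, v] (g := ![a, b]) (by simp [Fin.forall_fin_two, ha, hb])

lemma completed_square_le {N : ℝ} (hN : 0 < N) (s x : ℝ) :
    s ^ 2 / (2 * (N + 1)) - (s / N) ^ 2 / 2 ≤ (s - x) ^ 2 / (2 * N) + x ^ 2 / 4 := by
  have htitu : s ^ 2 / (2 * N + 4) ≤ (s - x) ^ 2 / (2 * N) + x ^ 2 / 4 := by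
    simpa using add_sq_div_add_le (by positivity : 0 < 2 * N) four_pos (s - x) x
  have hgap : s ^ 2 / (2 * (N + 1)) - (s / N) ^ 2 / 2 - s ^ 2 / (2 * N + 4) =
      -(s ^ 2 * (3 * N + 2) / (2 * N ^ 2 * (N + 1) * (N + 2))) := by
    field_simp
    ring
  have : 0 ≤ s ^ 2 * (3 * N + 2) / (2 * N ^ 2 * (N + 1) * (N + 2)) := by positivity
  linarith

noncomputable def twoClusterOddsBound (m : ℝ) : ℝ :=
  1 / (2 * Real.sqrt 2) * Real.exp (-m ^ 2 / 2)

lemma twoClusterOddsBound_pos (m : ℝ) : 0 < twoClusterOddsBound m := by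
  unfold twoClusterOddsBound
  positivity

lemma continuous_twoClusterOddsBound : Continuous twoClusterOddsBound := by
  unfold twoClusterOddsBound
  fun_prop

lemma twoClusterOddsBound_mul_pJoint_one_le {n : ℕ} (hn : 2 ≤ n) (x : Fin n → ℝ)
    (k : Fin n) :
    twoClusterOddsBound ((∑ j, x j) / n) / n * pJoint n 1 x ≤
      crpWeight (singletonSplit k) * ∏ i, clusterMarginal x (singletonSplit k i) := by
  have hN : (2 : ℝ) ≤ n := by exact_mod_cast hn
  have hden : (0 : ℝ) < n * (n - 1) * Real.sqrt n := by
    have : (0 : ℝ) < n - 1 := by linarith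
    positivity
  have hcoeff : (n ^ 2 * Real.sqrt (n + 1))⁻¹ ≤ (n * (n - 1) * Real.sqrt n)⁻¹ := by
    refine inv_anti₀ hden ?_
    rw [sq, mul_assoc, mul_assoc]
    exact mul_le_mul_of_nonneg_left
      (mul_le_mul (by linarith) (Real.sqrt_le_sqrt (by linarith)) (by positivity) (by positivity))
      (by positivity)
  set s := ∑ j, x j with hs
  set Φ := ∏ j, stdNormalPDF (x j) with hΦ_def
  have hΦ : 0 < Φ := prod_pos fun j _ => stdNormalPDF_pos _
  have hlhs : twoClusterOddsBound (s / n) / n * pJoint n 1 x =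
      Φ / (2 * Real.sqrt 2) * ((n ^ 2 * Real.sqrt (n + 1))⁻¹ *
        Real.exp (s ^ 2 / (2 * (n + 1)) - (s / n) ^ 2 / 2)) := by
    rw [pJoint_one (by omega), clusterMarginal_univ, twoClusterOddsBound, Real.exp_sub, ← hs,
      ← hΦ_def]
    field_simp
    rw [← Real.exp_add, neg_add_cancel, Real.exp_zero]
  have hrhs : crpWeight (singletonSplit k) * ∏ i, clusterMarginal x (singletonSplit k i) =
      Φ / (2 * Real.sqrt 2) * ((n * (n - 1) * Real.sqrt n)⁻¹ *
        Real.exp ((s - x k) ^ 2 / (2 * n) + x k ^ 2 / 4)) := by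
    rw [Fin.prod_univ_two, crpWeight_singletonSplit hn]
    simp only [singletonSplit, Matrix.cons_val_zero, Matrix.cons_val_one]
    rw [clusterMarginal_compl_mul_singleton (by omega), ← hs, ← hΦ_def]
    have : (n : ℝ) - 1 ≠ 0 := by linarith
    field_simp
  rw [hlhs, hrhs]
  gcongr
  exact completed_square_le (by linarith) s (x k)

lemma twoClusterOddsBound_mul_pJoint_one_le_pJoint_two {n : ℕ} (hn : 2 ≤ n)
    (x : Fin n → ℝ) :
    twoClusterOddsBound ((∑ j, x j) / n) * pJoint n 1 x ≤ pJoint n 2 x := by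
  have hsplit : univ.image singletonSplit ⊆ orderedPartitions n 2 :=
    image_subset_iff.2 fun k _ => singletonSplit_mem_orderedPartitions hn k
  calc twoClusterOddsBound ((∑ j, x j) / n) * pJoint n 1 x
      = ∑ _k : Fin n, twoClusterOddsBound ((∑ j, x j) / n) / n * pJoint n 1 x := by
        have : (n : ℝ) ≠ 0 := by positivity
        rw [sum_const, card_univ, Fintype.card_fin, nsmul_eq_mul]
        field_simp
    _ ≤ ∑ k, crpWeight (singletonSplit k) * ∏ i, clusterMarginal x (singletonSplit k i) :=
        sum_le_sum fun k _ => twoClusterOddsBound_mul_pJoint_one_le hn x k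
    _ = ∑ A ∈ univ.image singletonSplit, crpWeight A * ∏ i, clusterMarginal x (A i) :=
        by rw [sum_image fun _ _ _ _ h => singletonSplit_injective h]
    _ ≤ pJoint n 2 x :=
        sum_le_sum_of_subset_of_nonneg hsplit fun A _ _ =>
          (crpWeight_mul_prod_clusterMarginal_pos x A).le

lemma posteriorOne_le {n : ℕ} (hn : 2 ≤ n) (x : Fin n → ℝ) :
    posteriorOne n x ≤ 1 / (1 + twoClusterOddsBound ((∑ j, x j) / n)) := by
  set c := twoClusterOddsBound ((∑ j, x j) / n)
  have hc : 0 < c := twoClusterOddsBound_pos _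
  have hone : 0 < pJoint n 1 x := by
    rw [pJoint_one (by omega)]
    have := clusterMarginal_pos x univ
    positivity
  have hevidence : (1 + c) * pJoint n 1 x ≤ ∑ t ∈ Icc 1 n, pJoint n t x := by
    have hsub : ({1, 2} : Finset ℕ) ⊆ Icc 1 n := by
      intro t ht
      simp only [mem_insert, mem_singleton] at ht
      rcases ht with rfl | rfl <;> simp <;> omega
    calc (1 + c) * pJoint n 1 x ≤ pJoint n 1 x + pJoint n 2 x := by
          linarith [twoClusterOddsBound_mul_pJoint_one_le_pJoint_two hn x]
      _ = ∑ t ∈ {1, 2}, pJoint n t x := by rw [sum_pair (by norm_num)]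
      _ ≤ ∑ t ∈ Icc 1 n, pJoint n t x :=
          sum_le_sum_of_subset_of_nonneg hsub fun t _ _ => pJoint_nonneg n t x
  calc posteriorOne n x ≤ pJoint n 1 x / ((1 + c) * pJoint n 1 x) :=
        div_le_div_of_nonneg_left hone.le (by positivity) hevidence
    _ = 1 / (1 + c) := by field_simp

theorem posterior_one_not_consistent_integrable_general {Ω : Type*} [MeasurableSpace Ω]
    (μ : Measure Ω) (X : ℕ → Ω → ℝ)
    (hindep : ProbabilityTheory.iIndepFun X μ)
    (hident : ∀ i, ProbabilityTheory.IdentDistrib (X i) (X 0) μ μ)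
    (hint : Integrable (X 0) μ) :
    1 / (1 + 1 / (2 * Real.sqrt 2) * Real.exp (-(∫ ω, X 0 ω ∂μ) ^ 2 / 2)) < 1 ∧
    ∀ᵐ ω ∂μ,
      ¬ Tendsto (fun n : ℕ => posteriorOne n fun i : Fin n => X i ω) atTop (nhds 1) ∧
      Filter.limsup (fun n : ℕ => posteriorOne n fun i : Fin n => X i ω) atTop ≤
        1 / (1 + 1 / (2 * Real.sqrt 2) * Real.exp (-(∫ ω, X 0 ω ∂μ) ^ 2 / 2)) := by
  set m := ∫ ω, X 0 ω ∂μ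
  set L := 1 / (1 + twoClusterOddsBound m)
  have hL : L < 1 := by
    have := twoClusterOddsBound_pos m
    rw [div_lt_one (by linarith)]
    linarith
  refine ⟨hL, ?_⟩
  filter_upwards [ProbabilityTheory.strong_law_ae_real X hint
    (fun i j hij => hindep.indepFun hij) hident] with ω hmean
  set f := fun n : ℕ => posteriorOne n fun i : Fin n => X i ω
  set g := fun n : ℕ => 1 / (1 + twoClusterOddsBound ((∑ i ∈ range n, X i ω) / n))
  have hg : Tendsto g atTop (nhds L) :=
    tendsto_const_nhds.div (((continuous_twoClusterOddsBound.tendsto m).comp hmean).const_add 1)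
      (add_pos one_pos (twoClusterOddsBound_pos m)).ne'
  have hfg : ∀ᶠ n in atTop, f n ≤ g n := by
    filter_upwards [eventually_ge_atTop 2] with n hn
    simpa [g, Fin.sum_univ_eq_sum_range (fun i => X i ω)] using
      posteriorOne_le hn fun i : Fin n => X i ω
  have hlimsup : limsup f atTop ≤ L :=
    (limsup_le_limsup hfg (isCoboundedUnder_le_of_le atTop fun n => posteriorOne_nonneg n _)
      hg.isBoundedUnder_le).trans_eq hg.limsup_eq
  exact ⟨fun h => by linarith [h.limsup_eq], hlimsup⟩

/-- If `X₁, X₂, …` are i.i.d. real-valued with `E|X₁| < ∞` and mean `μ' = E X₁`, then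
almost surely the posterior probability `p(T_n = 1 | X_{1:n})` under the standard normal
DPM with `α = 1` does not converge to `1`; indeed, almost surely
`limsup_n p(T_n = 1 | X_{1:n}) ≤ 1/(1 + (1/(2√2)) exp(-μ'²/2)) < 1`. -/
theorem posterior_one_not_consistent_integrable {Ω : Type*} [MeasurableSpace Ω]
    (μ : Measure Ω) [IsProbabilityMeasure μ] (X : ℕ → Ω → ℝ)
    (hmeas : ∀ i, Measurable (X i))
    (hindep : ProbabilityTheory.iIndepFun X μ)
    (hident : ∀ i, ProbabilityTheory.IdentDistrib (X i) (X 0) μ μ)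
    (hint : Integrable (X 0) μ) :
    1 / (1 + 1 / (2 * Real.sqrt 2) * Real.exp (-(∫ ω, X 0 ω ∂μ) ^ 2 / 2)) < 1 ∧
    ∀ᵐ ω ∂μ,
      ¬ Tendsto (fun n : ℕ => posteriorOne n fun i : Fin n => X i ω) atTop (nhds 1) ∧
      Filter.limsup (fun n : ℕ => posteriorOne n fun i : Fin n => X i ω) atTop ≤
        1 / (1 + 1 / (2 * Real.sqrt 2) * Real.exp (-(∫ ω, X 0 ω ∂μ) ^ 2 / 2)) :=
  posterior_one_not_consistent_integrable_general μ X hindep hident hint
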